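/- arXiv:cs/0701025 — 2 statements merged into one kernel-verified Lean document; each statement's English description precedes it below -/
import Mathlib

section
/- Let (A, φ) be a tracial noncommutative probability space and (A_i)_{i∈I} unital *-subalgebras such that φ(a_1⋯a_n) = 0 whenever a_j ∈ A_{i_j}, consecutive indices differ (i_1 ≠ i_2, ..., i_{n-1} ≠ i_n), the circular condition i_1 ≠ i_n also holds, and all φ(a_j) = 0. Then φ(a_1⋯a_n) = 0 also for all such alternating centered tuples where i_1 = i_n. In other words, omitting the circularity condition i_1 ≠ i_n from the definition of freeness yields an equivalent definition when φ is a trace. -/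
/-- In a tracial noncommutative probability space, the definition of
freeness with the circularity condition `i₁ ≠ iₙ` implies the definition without it:
alternating centered products also vanish when the first and last indices coincide. -/
theorem freeness_circular_condition_redundant
    {A : Type*} [Ring A] [Algebra ℂ A] {I : Type*}
    (φ : A →ₗ[ℂ] ℂ) (hunit : φ 1 = 1)
    (htrace : ∀ x y : A, φ (x * y) = φ (y * x))
    (S : I → Subalgebra ℂ A)
    (hfree : ∀ (n : ℕ) (a : Fin (n + 1) → A) (idx : Fin (n + 1) → I),
      (∀ j, a j ∈ S (idx j)) →
      (∀ j : Fin n, idx j.castSucc ≠ idx j.succ) →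
      idx 0 ≠ idx (Fin.last n) →
      (∀ j, φ (a j) = 0) →
      φ (List.ofFn a).prod = 0) :
    ∀ (n : ℕ) (a : Fin (n + 1) → A) (idx : Fin (n + 1) → I),
      (∀ j, a j ∈ S (idx j)) →
      (∀ j : Fin n, idx j.castSucc ≠ idx j.succ) →
      (∀ j, φ (a j) = 0) →
      φ (List.ofFn a).prod = 0 := by
  intro n
  induction n using Nat.strong_induction_on with
  | _ n IH =>
    intro a idx hmem halt hcent
    match n, a, idx, hmem, halt, hcent, IH with
    | 0, a, idx, hmem, halt, hcent, IH =>
      simpa using hcent 0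
    | 1, a, idx, hmem, halt, hcent, IH =>
      refine hfree 1 a idx hmem halt ?_ hcent
      simpa using halt 0
    | (m+2), a, idx, hmem, halt, hcent, IH =>
      by_cases h : idx 0 = idx (Fin.last (m+2))
      · -- hard case
        have halt' : ∀ (k : ℕ) (hk : k + 1 < m + 3),
            idx ⟨k, by omega⟩ ≠ idx ⟨k+1, hk⟩ := by
          intro k hk
          have := halt ⟨k, by omega⟩
          simpa [Fin.castSucc_mk, Fin.succ_mk, Fin.ext_iff] using this
        have idxne : ∀ p q : Fin (m+3), (q : ℕ) = (p : ℕ) + 1 → idx p ≠ idx q := by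
          intro p q hpq
          have e1 : q = ⟨(p : ℕ) + 1, by omega⟩ := Fin.ext (by simp [hpq])
          rw [e1]
          exact halt' (p : ℕ) (by omega)
        set c : ℂ := φ (a (Fin.last (m+2)) * a 0) with hc
        set b : A := a (Fin.last (m+2)) * a 0 - c • 1 with hb
        have hφb : φ b = 0 := by
          simp [hb, hunit, hc]
        set v : Fin (m+1) → A := fun i => a i.castSucc.succ with hv
        set L : List A := List.ofFn v with hL
        have hsplit : (List.ofFn a).prod = a 0 * L.prod * a (Fin.last (m+2)) := by
          rw [List.ofFn_succ, List.ofFn_succ' (fun i : Fin (m+2) => a i.succ)]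
          simp [hL, hv, Fin.succ_last, mul_assoc]
        -- first term : hfree on (b, v)
        have hfirst : φ (b * L.prod) = 0 := by
          have hprod : b * L.prod = (List.ofFn (Fin.cons b v : Fin (m+2) → A)).prod := by
            rw [List.ofFn_succ]
            simp [Fin.cons_succ, hL]
          rw [hprod]
          refine hfree (m+1) (Fin.cons b v)
            (Fin.cons (idx 0) (fun i : Fin (m+1) => idx i.castSucc.succ)) ?_ ?_ ?_ ?_
          · intro j
            induction j using Fin.cases with
            | zero =>
              simp only [Fin.cons_zero]
              refine Subalgebra.sub_mem _ (Subalgebra.mul_mem _ ?_ (hmem 0))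
                (Subalgebra.smul_mem _ (Subalgebra.one_mem _) c)
              rw [h]; exact hmem _
            | succ i =>
              simp only [Fin.cons_succ, hv]
              exact hmem _
          · intro j
            induction j using Fin.cases with
            | zero =>
              simp only [Fin.castSucc_zero, Fin.cons_zero, Fin.cons_succ]
              exact idxne _ _ (by simp)
            | succ i =>
              have e1 : (i.succ.castSucc : Fin (m+2)) = (i.castSucc).succ := rfl
              rw [e1]
              simp only [Fin.cons_succ]
              exact idxne _ _ (by simp)
          · have e1 : (Fin.last (m+1)) = (Fin.last m).succ := rfl
            rw [e1]
            simp only [Fin.cons_zero, Fin.cons_succ]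
            rw [h]
            exact fun he => idxne _ _ (by simp) he.symm
          · intro j
            induction j using Fin.cases with
            | zero => simpa using hφb
            | succ i => simp only [Fin.cons_succ, hv]; exact hcent _
        -- second term : IH
        have hsecond : φ L.prod = 0 := by
          rcases m with _ | m'
          · simp only [hL, hv, List.ofFn_succ, List.ofFn_zero, List.prod_cons,
              List.prod_nil, mul_one]
            exact hcent _
          · refine IH (m'+1) (by omega) v (fun i => idx i.castSucc.succ)
              (fun i => hmem _) ?_ (fun i => hcent _)
            intro j
            exact idxne _ _ (by simp)
        -- put together
        have expand : a (Fin.last (m+2)) * (a 0 * L.prod) = b * L.prod + c • L.prod := by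
          have hbc : a (Fin.last (m+2)) * a 0 = b + c • 1 := by
            rw [hb]; abel
          rw [← mul_assoc, hbc, add_mul, smul_mul_assoc, one_mul]
        have key : φ (List.ofFn a).prod = φ (b * L.prod) + c * φ L.prod := by
          rw [hsplit, htrace (a 0 * L.prod) (a (Fin.last (m+2))), expand, map_add, map_smul]
          simp
        rw [key, hfirst, hsecond]
        simp
      · exact hfree (m+2) a idx hmem halt h hcent
end

section
/- (Stieltjes inversion) If μ is a probability measure on ℝ whose distribution function has a continuous density f^μ at λ, then f^μ(λ) = lim_{ω → 0⁺} (1/π) Im[m_μ(λ + iω)], where m_μ is the Stieltjes transform of μ. -/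
/-!
`(1/π) Im m_μ(x₀ + iγ)` is the integral against `μ` of the Cauchy density of location `x₀` and
scale `γ`, and these densities form an approximate identity as `γ → 0⁺`. Since `f` is only
continuous at `x₀` and need not be measurable, the approximate identity is applied to the
Radon–Nikodym derivative `ρ` of `μ` instead: `ρ` has the same integrals as `f` over measurable
sets, so it lies a.e. below `f` and a.e. above every measurable minorant of `f`. Hence `ρ` tends to
`f x₀` along `𝓝 x₀ ⊓ ae`, and after a change on a null set it is continuous at `x₀`.
-/

open MeasureTheory Filter Topology Set Real ProbabilityTheory
open scoped ENNReal NNReal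

lemma NNReal.tendsto_coe_nhdsGT_zero : Tendsto ((↑) : ℝ≥0 → ℝ) (𝓝[>] 0) (𝓝[>] 0) := by
  rw [← NNReal.coe_zero]
  exact (NNReal.map_coe_nhdsGT 0).le

lemma Real.tendsto_toNNReal_nhdsGT_zero : Tendsto Real.toNNReal (𝓝[>] 0) (𝓝[>] 0) := by
  rw [← NNReal.coe_zero, ← NNReal.map_coe_nhdsGT, tendsto_map'_iff]
  simp only [Function.comp_def, Real.toNNReal_coe]
  exact tendsto_id

section DensityLimit

variable {α : Type*} [MeasurableSpace α] {μ : Measure α}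

theorem exists_ae_eq_tendsto_of_tendsto_inf_ae {β : Type*} [TopologicalSpace β]
    [FirstCountableTopology β] {l : Filter α} {g : α → β} {a : β}
    (h : Tendsto g (l ⊓ ae μ) (𝓝 a)) :
    ∃ g' : α → β, g' =ᵐ[μ] g ∧ Tendsto g' l (𝓝 a) := by
  classical
  obtain ⟨V, hV⟩ := (𝓝 a).exists_antitone_basis
  have hmem : ∀ n, ∃ U ∈ l, ∃ A ∈ ae μ, U ∩ A ⊆ g ⁻¹' V n := fun n =>
    mem_inf_iff_superset.1 (h (hV.mem n))
  choose U hU A hA hUA using hmem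
  set S := ⋂ n, A n
  refine ⟨fun x => if x ∈ S then g x else a, ?_, ?_⟩
  · filter_upwards [(countable_iInter_mem.2 hA : S ∈ ae μ)] with x hx using if_pos hx
  · refine hV.toHasBasis.tendsto_right_iff.2 fun n _ => ?_
    filter_upwards [hU n] with x hx
    by_cases hxS : x ∈ S
    · simpa [hxS] using hUA n ⟨hx, mem_iInter.1 hxS n⟩
    · simpa [hxS] using mem_of_mem_nhds (hV.mem n)

theorem tendsto_inf_ae_of_withDensity_eq [TopologicalSpace α] [OpensMeasurableSpace α]
    [SigmaFinite μ] {ρ F : α → ℝ≥0∞} (hρ : Measurable ρ)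
    (h : μ.withDensity ρ = μ.withDensity F) {x₀ : α} {a : ℝ≥0∞}
    (hF : Tendsto F (𝓝 x₀) (𝓝 a)) : Tendsto ρ (𝓝 x₀ ⊓ ae μ) (𝓝 a) := by
  have hsetLIntegral : ∀ s, MeasurableSet s → ∫⁻ x in s, ρ x ∂μ = ∫⁻ x in s, F x ∂μ :=
    fun s hs => by rw [← withDensity_apply _ hs, h, withDensity_apply _ hs]
  refine tendsto_order.2 ⟨fun b hb => ?_, fun b hb => ?_⟩
  · obtain ⟨c, hbc, hca⟩ := exists_between hb
    set U := interior {x | c < F x}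
    have hU : U ∈ 𝓝 x₀ := interior_mem_nhds.2 (hF.eventually (lt_mem_nhds hca))
    have hcρ : U.indicator (fun _ => c) ≤ᵐ[μ] ρ :=
      ae_le_of_forall_setLIntegral_le_of_sigmaFinite
        (measurable_const.indicator isOpen_interior.measurableSet) fun s hs _ => by
          rw [hsetLIntegral s hs]
          refine lintegral_mono fun x => ?_
          by_cases hx : x ∈ U
          · have hcF : c < F x := interior_subset (s := {x | c < F x}) hx
            simpa [hx] using hcF.le
          · simp [hx]
    filter_upwards [mem_inf_of_left hU, mem_inf_of_right hcρ] with x hxU hx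
    exact hbc.trans_le (by simpa [indicator_of_mem hxU] using hx)
  · have hρF : ρ ≤ᵐ[μ] F := ae_le_of_forall_setLIntegral_le_of_sigmaFinite hρ fun s hs _ =>
      (hsetLIntegral s hs).le
    filter_upwards [mem_inf_of_left (hF.eventually (gt_mem_nhds hb)), mem_inf_of_right hρF]
      with x hFx hρx
    exact hρx.trans_lt hFx

end DensityLimit

namespace ProbabilityTheory

lemma cauchyPDFReal_nonneg (x₀ : ℝ) (γ : ℝ≥0) (x : ℝ) : 0 ≤ cauchyPDFReal x₀ γ x := by
  rw [cauchyPDFReal_def]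
  positivity

lemma cauchyPDFReal_le_of_le_abs_sub (x₀ : ℝ) (γ : ℝ≥0) {x δ : ℝ} (hδ : 0 < δ)
    (hx : δ ≤ |x - x₀|) : cauchyPDFReal x₀ γ x ≤ π⁻¹ * γ * (δ ^ 2)⁻¹ := by
  have hδx : δ ^ 2 ≤ (x - x₀) ^ 2 + γ ^ 2 := by
    nlinarith [sq_abs (x - x₀), pow_le_pow_left₀ hδ.le hx 2, sq_nonneg (γ : ℝ)]
  rw [cauchyPDFReal_def]
  gcongr

lemma tendstoUniformlyOn_cauchyPDFReal_compl (x₀ : ℝ) {u : Set ℝ} (hu : u ∈ 𝓝 x₀) :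
    TendstoUniformlyOn (cauchyPDFReal x₀) 0 (𝓝 0) uᶜ := by
  obtain ⟨δ, hδ, hball⟩ := Metric.mem_nhds_iff.1 hu
  have hbound : Tendsto (fun γ : ℝ≥0 => π⁻¹ * γ * (δ ^ 2)⁻¹) (𝓝 0) (𝓝 0) := by
    simpa using ((NNReal.continuous_coe.tendsto 0).const_mul π⁻¹).mul_const (δ ^ 2)⁻¹
  refine Metric.tendstoUniformlyOn_iff.2 fun ε hε => ?_
  filter_upwards [hbound.eventually (gt_mem_nhds hε)] with γ hγ x hx
  have hδx : δ ≤ |x - x₀| := by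
    by_contra! h
    exact hx (hball (by simpa [Real.dist_eq] using h))
  rw [Pi.zero_apply, dist_zero_left, Real.norm_of_nonneg (cauchyPDFReal_nonneg ..)]
  exact (cauchyPDFReal_le_of_le_abs_sub x₀ γ hδ hδx).trans_lt hγ

lemma intervalIntegral_cauchyPDFReal (x₀ : ℝ) {γ : ℝ≥0} (hγ : γ ≠ 0) (a b : ℝ) :
    ∫ x in a..b, cauchyPDFReal x₀ γ x = (arctan ((b - x₀) / γ) - arctan ((a - x₀) / γ)) / π := by
  rw [sub_div]
  refine intervalIntegral.integral_eq_sub_of_hasDerivAt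
    (f := fun x => arctan ((x - x₀) / γ) / π) (fun x _ => ?_)
    (integrable_cauchyPDFReal x₀).intervalIntegrable
  have hγ' : (γ : ℝ) ≠ 0 := NNReal.coe_ne_zero.2 hγ
  refine ((((hasDerivAt_id x).sub_const x₀).div_const (γ : ℝ)).arctan.div_const π).congr_deriv ?_
  rw [cauchyPDFReal_def', NNReal.coe_inv, id]
  field_simp

lemma tendsto_setIntegral_cauchyPDFReal_Icc (x₀ : ℝ) :
    Tendsto (fun γ : ℝ≥0 => ∫ x in Icc (x₀ - 1) (x₀ + 1), cauchyPDFReal x₀ γ x) (𝓝[>] 0)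
      (𝓝 1) := by
  have hinv : Tendsto (fun γ : ℝ≥0 => (γ : ℝ)⁻¹) (𝓝[>] 0) atTop :=
    tendsto_inv_nhdsGT_zero.comp NNReal.tendsto_coe_nhdsGT_zero
  have hlim : Tendsto (fun γ : ℝ≥0 => 2 * arctan (γ : ℝ)⁻¹ / π) (𝓝[>] 0)
      (𝓝 (2 * (π / 2) / π)) :=
    (((tendsto_arctan_atTop.mono_right nhdsWithin_le_nhds).comp hinv).const_mul 2).div_const π
  rw [show 2 * (π / 2) / π = 1 by field_simp] at hlim
  refine hlim.congr' ?_
  filter_upwards [self_mem_nhdsWithin] with γ (hγ : 0 < γ)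
  rw [integral_Icc_eq_integral_Ioc, ← intervalIntegral.integral_of_le (by linarith),
    intervalIntegral_cauchyPDFReal x₀ hγ.ne', show x₀ + 1 - x₀ = 1 by ring,
    show x₀ - 1 - x₀ = -1 by ring, neg_div, arctan_neg, one_div]
  ring

theorem tendsto_integral_cauchyPDFReal_smul {E : Type*} [NormedAddCommGroup E]
    [NormedSpace ℝ E] [CompleteSpace E] (x₀ : ℝ) {g : ℝ → E} {a : E} (hg : Integrable g)
    (hga : Tendsto g (𝓝 x₀) (𝓝 a)) :
    Tendsto (fun γ : ℝ≥0 => ∫ x, cauchyPDFReal x₀ γ x • g x) (𝓝[>] 0) (𝓝 a) :=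
  tendsto_integral_peak_smul_of_integrable_of_tendsto measurableSet_Icc
    (Icc_mem_nhds (by linarith) (by linarith)) (by simp)
    (Eventually.of_forall fun γ => cauchyPDFReal_nonneg x₀ γ)
    (fun u hu hx₀ v hv =>
      (tendstoUniformlyOn_cauchyPDFReal_compl x₀ (hu.mem_nhds hx₀) v hv).filter_mono
        nhdsWithin_le_nhds)
    (tendsto_setIntegral_cauchyPDFReal_Icc x₀)
    (Eventually.of_forall fun γ => (measurable_cauchyPDFReal x₀ γ).aestronglyMeasurable) hg hga

end ProbabilityTheory

noncomputable def stieltjesTransform (μ : Measure ℝ) (z : ℂ) : ℂ :=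
  ∫ t, 1 / ((t : ℂ) - z) ∂μ

lemma norm_one_div_ofReal_sub_le {z : ℂ} (hz : 0 < z.im) (t : ℝ) :
    ‖1 / ((t : ℂ) - z)‖ ≤ 1 / z.im := by
  have : z.im ≤ ‖(t : ℂ) - z‖ := by
    simpa [abs_of_pos hz] using Complex.abs_im_le_norm ((t : ℂ) - z)
  rw [norm_div, norm_one]
  gcongr

lemma integrable_one_div_ofReal_sub (μ : Measure ℝ) [IsFiniteMeasure μ] {z : ℂ} (hz : 0 < z.im) :
    Integrable (fun t : ℝ => 1 / ((t : ℂ) - z)) μ :=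
  (integrable_const (1 / z.im)).mono'
    (measurable_const.div (Complex.measurable_ofReal.sub_const z)).aestronglyMeasurable
    (Eventually.of_forall (norm_one_div_ofReal_sub_le hz))

lemma one_div_pi_mul_im_one_div_ofReal_sub (x₀ : ℝ) (γ : ℝ≥0) (t : ℝ) :
    1 / π * (1 / ((t : ℂ) - (x₀ + (γ : ℝ) * Complex.I))).im = cauchyPDFReal x₀ γ t := by
  simp [cauchyPDFReal_def, Complex.normSq_apply]
  ring

theorem one_div_pi_mul_im_stieltjesTransform (μ : Measure ℝ) [IsFiniteMeasure μ] (x₀ : ℝ)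
    {γ : ℝ≥0} (hγ : γ ≠ 0) :
    1 / π * (stieltjesTransform μ (x₀ + (γ : ℝ) * Complex.I)).im =
      ∫ t, cauchyPDFReal x₀ γ t ∂μ := by
  have him := integral_im (integrable_one_div_ofReal_sub μ
    (z := x₀ + (γ : ℝ) * Complex.I) (by simpa [pos_iff_ne_zero] using hγ))
  simp only [RCLike.im_to_complex] at him
  rw [stieltjesTransform, ← him, ← integral_const_mul]
  exact integral_congr_ae (ae_of_all _ (one_div_pi_mul_im_one_div_ofReal_sub x₀ γ))

/-- Stieltjes inversion: if the probability measure `μ` on `ℝ` has a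
density `f` which is continuous at `x₀`, then
`f(x₀) = lim_{ω → 0⁺} (1/π) · Im m_μ(x₀ + iω)`. -/
theorem stieltjes_inversion
    (f : ℝ → ℝ) (hf : ∀ x, 0 ≤ f x)
    (μ : Measure ℝ) [IsProbabilityMeasure μ]
    (hμ : μ = volume.withDensity (fun x => ENNReal.ofReal (f x)))
    (x₀ : ℝ) (hcont : ContinuousAt f x₀) :
    Filter.Tendsto
      (fun ω : ℝ =>
        (1 / Real.pi) * (∫ t, 1 / ((t : ℂ) - ((x₀ : ℂ) + ω * Complex.I)) ∂μ).im)
      (nhdsWithin 0 (Set.Ioi 0)) (nhds (f x₀)) := by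
  have hμac : μ ≪ volume := hμ ▸ withDensity_absolutelyContinuous _ _
  have hρ : Tendsto (fun x => (μ.rnDeriv volume x).toReal) (𝓝 x₀ ⊓ ae volume) (𝓝 (f x₀)) := by
    have h := tendsto_inf_ae_of_withDensity_eq (Measure.measurable_rnDeriv μ volume)
      ((Measure.withDensity_rnDeriv_eq μ volume hμac).trans hμ) (ENNReal.tendsto_ofReal hcont)
    simpa [Function.comp_def, ENNReal.toReal_ofReal (hf x₀)] using
      (ENNReal.tendsto_toReal ENNReal.ofReal_ne_top).comp h
  obtain ⟨g, hgρ, hg⟩ := exists_ae_eq_tendsto_of_tendsto_inf_ae hρ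
  have hpeak := tendsto_integral_cauchyPDFReal_smul x₀
    (Measure.integrable_toReal_rnDeriv.congr hgρ.symm) hg
  refine (hpeak.comp Real.tendsto_toNNReal_nhdsGT_zero).congr' ?_
  filter_upwards [self_mem_nhdsWithin] with ω (hω : 0 < ω)
  calc ∫ x, cauchyPDFReal x₀ ω.toNNReal x • g x
      = ∫ x, (μ.rnDeriv volume x).toReal * cauchyPDFReal x₀ ω.toNNReal x :=
        integral_congr_ae (hgρ.mono fun x hx => by dsimp only; rw [smul_eq_mul, hx, mul_comm])
    _ = ∫ x, cauchyPDFReal x₀ ω.toNNReal x ∂μ := integral_toReal_rnDeriv_mul hμac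
    _ = 1 / π * (stieltjesTransform μ (x₀ + ω * Complex.I)).im := by
        rw [← one_div_pi_mul_im_stieltjesTransform μ x₀ (by simpa using hω),
          Real.coe_toNNReal _ hω.le]
end
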